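/- arXiv:2105.06996 — 2 statements merged into one kernel-verified Lean document; each statement's English description precedes it below -/
import Mathlib

section
/- Let w be a finite word (list) over the two symbols {b, c} of odd length, and let A_w be the operator obtained from the diagonal matrix C' by applying, for each symbol of w read in order, the superoperator ∇ (for symbol b) or ∇_C (for symbol c). Then the uniform-state expectation value of A_w vanishes: ⟨A_w⟩₀ = 0. -/
/-! Both generators `B` and `C` are real symmetric matrices, so commuting with either of
them anticommutes with transposition: `[S, A]ᵀ = -[S, Aᵀ]`. Since `C'` is symmetric too,
`(A_w)ᵀ = (-1)^|w| A_w`, and for odd `|w|` the operator `A_w` is antisymmetric. The uniform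
state is real, so `⟨Aᵀ⟩₀ = ⟨A⟩₀`, which forces `⟨A_w⟩₀ = 0`. -/

open Matrix Asymptotics

noncomputable section

abbrev Bits (n : ℕ) := Fin n → Bool

/-- `x` with bit `j` flipped. -/
def flipBit {n : ℕ} (j : Fin n) (x : Bits n) : Bits n := Function.update x j (!x j)

/-- The bit-flip operator `X_j`. -/
def Xop {n : ℕ} (j : Fin n) : Matrix (Bits n) (Bits n) ℂ :=
  fun x y => if y = flipBit j x then 1 else 0

/-- The transverse-field mixing Hamiltonian `B = ∑ⱼ Xⱼ`. -/
def Bop (n : ℕ) : Matrix (Bits n) (Bits n) ℂ := ∑ j : Fin n, Xop j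

/-- The cost Hamiltonian: diagonal matrix with entries `c x`. -/
def Cop {n : ℕ} (c : Bits n → ℝ) : Matrix (Bits n) (Bits n) ℂ :=
  Matrix.diagonal fun x => (c x : ℂ)

/-- The gradient superoperator `∇A = [B, A]`. -/
def gradB {n : ℕ} (A : Matrix (Bits n) (Bits n) ℂ) : Matrix (Bits n) (Bits n) ℂ :=
  Bop n * A - A * Bop n

/-- The gradient with respect to the cost Hamiltonian `∇_C A = [C, A]`. -/
def gradC {n : ℕ} (c : Bits n → ℝ) (A : Matrix (Bits n) (Bits n) ℂ) :
    Matrix (Bits n) (Bits n) ℂ :=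
  Cop c * A - A * Cop c

/-- The uniform superposition state `|s⟩`, every entry `(2^n)^{-1/2}`. -/
def sVec (n : ℕ) : Bits n → ℂ := fun _ => ((Real.sqrt (2 ^ n))⁻¹ : ℝ)

/-- Initial-state expectation value `⟨A⟩₀ = ⟨s|A|s⟩`. -/
def expect0 {n : ℕ} (A : Matrix (Bits n) (Bits n) ℂ) : ℂ :=
  star (sVec n) ⬝ᵥ (A *ᵥ sVec n)

/-- Partial cost difference `∂ⱼc(x) = c(x⁽ʲ⁾) − c(x)`. -/
def pd {n : ℕ} (c : Bits n → ℝ) (j : Fin n) (x : Bits n) : ℝ := c (flipBit j x) - c x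

/-- Cost divergence `dc(x) = ∑ⱼ ∂ⱼc(x)`. -/
def dcFun {n : ℕ} (c : Bits n → ℝ) (x : Bits n) : ℝ := ∑ j : Fin n, pd c j x

/-- The two symbols of the word: `b` stands for applying `∇ = [B,·]`,
`c` stands for applying `∇_C = [C,·]`. -/
inductive GradSym : Type
  | b : GradSym
  | c : GradSym

/-- Apply the superoperators corresponding to the symbols of `w`, read in order,
starting from the matrix `A`. -/
def applyWord {n : ℕ} (c : Bits n → ℝ) (w : List GradSym)
    (A : Matrix (Bits n) (Bits n) ℂ) : Matrix (Bits n) (Bits n) ℂ :=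
  w.foldl (fun M s => match s with
    | GradSym.b => gradB M
    | GradSym.c => gradC c M) A

theorem Matrix.IsSymm.transpose_commutator {m R : Type*} [Fintype m] [CommRing R]
    {S : Matrix m m R} (hS : S.IsSymm) (A : Matrix m m R) :
    (S * A - A * S)ᵀ = -(S * Aᵀ - Aᵀ * S) := by
  rw [transpose_sub, transpose_mul, transpose_mul, hS.eq]
  abel

lemma flipBit_flipBit {n : ℕ} (j : Fin n) (x : Bits n) : flipBit j (flipBit j x) = x := by
  simp [flipBit]

lemma isSymm_Xop {n : ℕ} (j : Fin n) : (Xop j).IsSymm := by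
  refine IsSymm.ext fun x y => ?_
  simp only [Xop]
  congr 1
  exact propext ⟨fun h => by rw [h, flipBit_flipBit], fun h => by rw [h, flipBit_flipBit]⟩

lemma isSymm_Bop (n : ℕ) : (Bop n).IsSymm := by
  simp only [IsSymm, Bop, transpose_sum, (isSymm_Xop _).eq]

lemma isSymm_Cop {n : ℕ} (c : Bits n → ℝ) : (Cop c).IsSymm :=
  isSymm_diagonal _

def gradSym {n : ℕ} (c : Bits n → ℝ) : GradSym → Matrix (Bits n) (Bits n) ℂ →
    Matrix (Bits n) (Bits n) ℂ
  | .b => gradB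
  | .c => gradC c

section gradSym

variable {n : ℕ} (c : Bits n → ℝ)

lemma applyWord_nil (A : Matrix (Bits n) (Bits n) ℂ) : applyWord c [] A = A := rfl

lemma applyWord_cons (s : GradSym) (w : List GradSym) (A : Matrix (Bits n) (Bits n) ℂ) :
    applyWord c (s :: w) A = applyWord c w (gradSym c s A) := by
  cases s <;> rfl

lemma gradSym_smul (s : GradSym) (k : ℂ) (A : Matrix (Bits n) (Bits n) ℂ) :
    gradSym c s (k • A) = k • gradSym c s A := by
  cases s <;> simp only [gradSym, gradB, gradC, Matrix.mul_smul, Matrix.smul_mul, smul_sub]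

lemma gradSym_transpose (s : GradSym) (A : Matrix (Bits n) (Bits n) ℂ) :
    (gradSym c s A)ᵀ = -gradSym c s Aᵀ := by
  cases s
  · exact (isSymm_Bop n).transpose_commutator A
  · exact (isSymm_Cop c).transpose_commutator A

lemma applyWord_smul (w : List GradSym) (k : ℂ) (A : Matrix (Bits n) (Bits n) ℂ) :
    applyWord c w (k • A) = k • applyWord c w A := by
  induction w generalizing A with
  | nil => rfl
  | cons s w ih => rw [applyWord_cons, applyWord_cons, gradSym_smul, ih]

lemma applyWord_transpose (w : List GradSym) (A : Matrix (Bits n) (Bits n) ℂ) :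
    (applyWord c w A)ᵀ = (-1 : ℂ) ^ w.length • applyWord c w Aᵀ := by
  induction w generalizing A with
  | nil => simp [applyWord_nil]
  | cons s w ih =>
    rw [applyWord_cons, applyWord_cons, ih, gradSym_transpose,
      ← neg_one_smul ℂ (gradSym c s Aᵀ), applyWord_smul, smul_smul, List.length_cons, pow_succ]

end gradSym

lemma star_sVec (n : ℕ) : star (sVec n) = sVec n := by
  funext x
  simp [sVec]

lemma expect0_transpose {n : ℕ} (A : Matrix (Bits n) (Bits n) ℂ) :
    expect0 Aᵀ = expect0 A := by
  unfold expect0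
  rw [star_sVec, dotProduct_mulVec, vecMul_transpose, dotProduct_comm]

lemma expect0_eq_zero_of_transpose_eq_neg {n : ℕ} {A : Matrix (Bits n) (Bits n) ℂ}
    (hA : Aᵀ = -A) : expect0 A = 0 := by
  have h : expect0 A = -expect0 A :=
    calc expect0 A = expect0 (-A) := by rw [← hA, expect0_transpose]
      _ = -expect0 A := by simp only [expect0, neg_mulVec, dotProduct_neg]
  linear_combination h / 2

theorem stmt1_general (n : ℕ) (c c' : Bits n → ℝ) (w : List GradSym)
    (hw : Odd w.length) :
    expect0 (applyWord c w (Cop c')) = 0 := by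
  apply expect0_eq_zero_of_transpose_eq_neg
  rw [applyWord_transpose, (isSymm_Cop c').eq, hw.neg_one_pow, neg_one_smul]

theorem stmt1 (n : ℕ) (hn : 1 ≤ n) (c c' : Bits n → ℝ) (w : List GradSym)
    (hw : Odd w.length) :
    expect0 (applyWord c w (Cop c')) = 0 :=
  stmt1_general n c c' w hw
end
end

section
/- For every cost function c : (Fin n → Bool) → ℝ and every real γ, with |γ⟩ := exp(−(iγ)•C) *ᵥ s, the expectation of the Hermitian operator i∇C in the phased state satisfies star|γ⟩ ⬝ᵥ ((i•(B·C − C·B)) *ᵥ |γ⟩) = −(2/2^n)·∑_x c(x)·∑_{j} sin(γ·∂_j c(x)). -/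
/-! In the phased state the amplitudes are `e^{-iγc(x)}/√2ⁿ`, and `[B, C]` couples only `x` with
its neighbours `x⁽ʲ⁾`, so the expectation equals `2⁻ⁿ ∑ⱼ ∑ₓ i ∂ⱼc(x) e^{-iγ∂ⱼc(x)}`. The flip
`x ↦ x⁽ʲ⁾` negates `∂ⱼc`, so it cancels the odd part `∂ⱼc · cos(γ∂ⱼc)`, and reindexing the even
part turns `∑ₓ ∂ⱼc(x) sin(γ∂ⱼc(x))` into `-2 ∑ₓ c(x) sin(γ∂ⱼc(x))`. -/

open Matrix Asymptotics

noncomputable section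

/-- The phased state `|γ⟩ = exp(−iγC)|s⟩`. -/
def phaseState {n : ℕ} (c : Bits n → ℝ) (γ : ℝ) : Bits n → ℂ :=
  NormedSpace.exp ((-(Complex.I * (γ : ℂ))) • Cop c) *ᵥ sVec n

section Involution

variable {α : Type*} [Fintype α] {σ : α → α}

theorem sum_eq_zero_of_involutive_of_comp_eq_neg {G : Type*} [AddCommGroup G]
    [IsAddTorsionFree G] (hσ : Function.Involutive σ) {f : α → G} (hf : ∀ x, f (σ x) = -f x) :
    ∑ x, f x = 0 :=
  self_eq_neg.mp <| calc
    ∑ x, f x = ∑ x, f (σ x) := (Equiv.sum_comp hσ.toPerm f).symm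
    _ = -∑ x, f x := by simp only [hf, Finset.sum_neg_distrib]

theorem sum_comp_sub_mul_of_involutive {R : Type*} [CommRing R] (hσ : Function.Involutive σ)
    (c : α → R) {h : α → R} (hh : ∀ x, h (σ x) = -h x) :
    ∑ x, (c (σ x) - c x) * h x = -2 * ∑ x, c x * h x := by
  have hswap : ∑ x, c (σ x) * h x = -∑ x, c x * h x := calc
    ∑ x, c (σ x) * h x = ∑ x, c (σ (σ x)) * h (σ x) :=
      (Equiv.sum_comp hσ.toPerm fun x => c (σ x) * h x).symm
    _ = -∑ x, c x * h x := by simp only [hσ _, hh, mul_neg, Finset.sum_neg_distrib]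
  rw [← sub_eq_zero]
  simp only [sub_mul, Finset.sum_sub_distrib, hswap]
  ring

end Involution

section Bits

variable {n : ℕ}

theorem flipBit_involutive (j : Fin n) : Function.Involutive (flipBit j) := by
  intro x
  simp [flipBit]

theorem pd_flipBit (c : Bits n → ℝ) (j : Fin n) (x : Bits n) :
    pd c j (flipBit j x) = -pd c j x := by
  simp [pd, flipBit_involutive j x]

theorem Xop_mulVec_apply (j : Fin n) (v : Bits n → ℂ) (x : Bits n) :
    (Xop j *ᵥ v) x = v (flipBit j x) := by
  simp [Xop, Matrix.mulVec, dotProduct]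

theorem Bop_mulVec_apply (v : Bits n → ℂ) (x : Bits n) :
    (Bop n *ᵥ v) x = ∑ j, v (flipBit j x) := by
  simp [Bop, Matrix.sum_mulVec, Xop_mulVec_apply]

theorem commutator_Bop_Cop_mulVec_apply (c : Bits n → ℝ) (v : Bits n → ℂ) (x : Bits n) :
    ((Bop n * Cop c - Cop c * Bop n) *ᵥ v) x = ∑ j, (pd c j x : ℂ) * v (flipBit j x) := by
  simp only [sub_mulVec, ← mulVec_mulVec, Pi.sub_apply, Cop, mulVec_diagonal, Bop_mulVec_apply,
    Finset.mul_sum, ← Finset.sum_sub_distrib, pd, Complex.ofReal_sub, sub_mul]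

end Bits

section PhaseState

open Complex

variable {n : ℕ}

theorem phaseState_apply (c : Bits n → ℝ) (γ : ℝ) (x : Bits n) :
    phaseState c γ x = exp (-(I * γ * c x)) * ((Real.sqrt (2 ^ n))⁻¹ : ℝ) := by
  have hdiag : (-(I * (γ : ℂ))) • Cop c = diagonal fun x => -(I * γ * c x) := by
    rw [Cop, ← diagonal_smul]
    simp only [Pi.smul_def, smul_eq_mul, neg_mul]
  simp [phaseState, hdiag, Matrix.exp_diagonal, mulVec_diagonal, sVec, exp_eq_exp_ℂ]

theorem star_phaseState_mul_phaseState (c : Bits n → ℝ) (γ : ℝ) (x y : Bits n) :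
    star (phaseState c γ x) * phaseState c γ y
      = (2 ^ n : ℂ)⁻¹ * exp (-(I * (γ * (c y - c x) : ℝ))) := by
  have hnorm : ((Real.sqrt (2 ^ n))⁻¹ * (Real.sqrt (2 ^ n))⁻¹ : ℝ) = (2 ^ n)⁻¹ := by
    rw [← mul_inv, Real.mul_self_sqrt (by positivity)]
  have hconj : star (exp (-(I * γ * c x))) = exp (I * γ * c x) := by
    rw [star_def, ← exp_conj]
    simp
  rw [phaseState_apply, phaseState_apply, star_mul', hconj, Complex.star_def, conj_ofReal,
    mul_mul_mul_comm, ← Complex.exp_add, ← ofReal_mul, hnorm, mul_comm]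
  push_cast
  ring_nf

end PhaseState

section Expectation

open Complex

variable {n : ℕ}

theorem I_mul_mul_exp_neg_I_mul (d θ : ℝ) :
    I * d * exp (-(I * θ)) = ((d * Real.sin θ : ℝ) : ℂ) + I * ((d * Real.cos θ : ℝ) : ℂ) := by
  rw [show -(I * θ) = ((-θ : ℝ) : ℂ) * I by push_cast; ring, exp_mul_I]
  push_cast
  rw [Complex.cos_neg, Complex.sin_neg]
  ring_nf
  rw [I_sq]
  ring

theorem sum_I_mul_pd_mul_exp (c : Bits n → ℝ) (γ : ℝ) (j : Fin n) :
    ∑ x, I * pd c j x * exp (-(I * (γ * pd c j x : ℝ)))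
      = ((-2 * ∑ x, c x * Real.sin (γ * pd c j x) : ℝ) : ℂ) := by
  have hsin : ∑ x, pd c j x * Real.sin (γ * pd c j x) = -2 * ∑ x, c x * Real.sin (γ * pd c j x) :=
    sum_comp_sub_mul_of_involutive (flipBit_involutive j) c fun x => by
      rw [pd_flipBit, mul_neg, Real.sin_neg]
  have hcos : ∑ x, pd c j x * Real.cos (γ * pd c j x) = 0 :=
    sum_eq_zero_of_involutive_of_comp_eq_neg (flipBit_involutive j) fun x => by
      rw [pd_flipBit, mul_neg, Real.cos_neg, neg_mul]
  simp only [I_mul_mul_exp_neg_I_mul, Finset.sum_add_distrib, ← Finset.mul_sum, ← ofReal_sum,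
    hsin, hcos, ofReal_zero, mul_zero, add_zero]

end Expectation

theorem stmt11_general (n : ℕ) (c : Bits n → ℝ) (γ : ℝ) :
    star (phaseState c γ) ⬝ᵥ
        ((Complex.I • (Bop n * Cop c - Cop c * Bop n)) *ᵥ phaseState c γ)
      = ((-(2 / 2 ^ n) * ∑ x : Bits n, c x * ∑ j : Fin n, Real.sin (γ * pd c j x) : ℝ) : ℂ) := by
  open Complex in
  calc star (phaseState c γ) ⬝ᵥ ((I • (Bop n * Cop c - Cop c * Bop n)) *ᵥ phaseState c γ)
      = ∑ x, ∑ j, I * pd c j x * (star (phaseState c γ x) * phaseState c γ (flipBit j x)) := by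
        simp only [dotProduct, smul_mulVec, Pi.smul_apply, smul_eq_mul,
          commutator_Bop_Cop_mulVec_apply, Finset.mul_sum, Pi.star_apply]
        exact Finset.sum_congr rfl fun _ _ => Finset.sum_congr rfl fun _ _ => by ring
    _ = ∑ j, ∑ x, (2 ^ n : ℂ)⁻¹ * (I * pd c j x * exp (-(I * (γ * pd c j x : ℝ)))) := by
        simp only [star_phaseState_mul_phaseState, pd]
        rw [Finset.sum_comm]
        exact Finset.sum_congr rfl fun _ _ => Finset.sum_congr rfl fun _ _ => by ring
    _ = (((2 ^ n)⁻¹ * ∑ j, -2 * ∑ x, c x * Real.sin (γ * pd c j x) : ℝ) : ℂ) := by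
        simp only [← Finset.mul_sum, sum_I_mul_pd_mul_exp]
        push_cast [Finset.mul_sum]
        rfl
    _ = _ := by
        congr 1
        simp only [Finset.mul_sum]
        rw [Finset.sum_comm]
        exact Finset.sum_congr rfl fun _ _ => Finset.sum_congr rfl fun _ _ => by ring

theorem stmt11 (n : ℕ) (hn : 1 ≤ n) (c : Bits n → ℝ) (γ : ℝ) :
    star (phaseState c γ) ⬝ᵥ
        ((Complex.I • (Bop n * Cop c - Cop c * Bop n)) *ᵥ phaseState c γ)
      = ((-(2 / 2 ^ n) * ∑ x : Bits n, c x * ∑ j : Fin n, Real.sin (γ * pd c j x) : ℝ) : ℂ) :=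
  stmt11_general n c γ
end
end
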